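/- Let L, F, Φ : ℝ³ → ℝ³ be continuous maps and let C₁ > 0, β > 1, C₃ > 1, R₀ > 0 and μ > 1 be constants such that: (1) F ∘ L = L ∘ Φ on ℝ³; (2) |Φ(x)| ≤ C₃·|x| for all x ∈ ℝ³; (3) |F(x)| ≥ C₁·|x|^β for all x with |x| > R₀; (4) log M(r, L) / log r → ∞ as r → ∞. Then there exist R₂ > 0 and a natural number N such that for every R > R₂, the sequence defined by r_m = C₃^m · M^m(R, L) satisfies M(r_m, L) > r_{m+1}^μ for all m ≥ N. -/

import Mathlib

open Metric Real Filter


/-- The maximum modulus of `g : ℝ³ → ℝ³` over the closed ball of radius `r`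
centered at the origin. -/
noncomputable def maxMod (g : EuclideanSpace ℝ (Fin 3) → EuclideanSpace ℝ (Fin 3))
    (r : ℝ) : ℝ :=
  sSup ((fun x => ‖g x‖) '' Metric.closedBall (0 : EuclideanSpace ℝ (Fin 3)) r)

/-- The iterated maximum modulus `M^m(R, g)`, with `M^1(R,g) = M(R,g)` and
`M^{m+1}(R,g) = M(M^m(R,g), g)`. -/
noncomputable def iterMaxMod (g : EuclideanSpace ℝ (Fin 3) → EuclideanSpace ℝ (Fin 3))
    (R : ℝ) (m : ℕ) : ℝ :=
  (fun r => maxMod g r)^[m] R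

lemma maxMod_bddAbove (g : EuclideanSpace ℝ (Fin 3) → EuclideanSpace ℝ (Fin 3))
    (hg : Continuous g) (r : ℝ) :
    BddAbove ((fun x => ‖g x‖) '' Metric.closedBall (0 : EuclideanSpace ℝ (Fin 3)) r) :=
  ((isCompact_closedBall _ _).image (hg.norm)).bddAbove

lemma le_maxMod (g : EuclideanSpace ℝ (Fin 3) → EuclideanSpace ℝ (Fin 3))
    (hg : Continuous g) {x : EuclideanSpace ℝ (Fin 3)} {r : ℝ} (hx : ‖x‖ ≤ r) :
    ‖g x‖ ≤ maxMod g r := by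
  apply le_csSup (maxMod_bddAbove g hg r)
  exact ⟨x, by simpa [mem_closedBall, dist_eq_norm] using hx, rfl⟩

lemma exists_maxMod (g : EuclideanSpace ℝ (Fin 3) → EuclideanSpace ℝ (Fin 3))
    (hg : Continuous g) {r : ℝ} (hr : 0 ≤ r) :
    ∃ x, ‖x‖ ≤ r ∧ maxMod g r = ‖g x‖ := by
  have hne : ((fun x => ‖g x‖) '' Metric.closedBall (0 : EuclideanSpace ℝ (Fin 3)) r).Nonempty :=
    (nonempty_closedBall.mpr hr).image _
  have := ((isCompact_closedBall (0 : EuclideanSpace ℝ (Fin 3)) r).image hg.norm).sSup_mem hne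
  obtain ⟨x, hx, hx'⟩ := this
  exact ⟨x, by simpa [mem_closedBall, dist_eq_norm] using hx, hx'.symm⟩

lemma maxMod_mono (g : EuclideanSpace ℝ (Fin 3) → EuclideanSpace ℝ (Fin 3))
    (hg : Continuous g) {r r' : ℝ} (hr : 0 ≤ r) (h : r ≤ r') :
    maxMod g r ≤ maxMod g r' := by
  obtain ⟨x, hx, hx'⟩ := exists_maxMod g hg hr
  rw [hx']
  exact le_maxMod g hg (hx.trans h)

/-- Lemma 4.2: under the functional equation `F ∘ L = L ∘ Φ`, a linear bound on `Φ`,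
a polynomial-type lower bound on `F`, and transcendental-type growth of `L`, for any
`μ > 1` there are `R₂ > 0` and `N ∈ ℕ` such that for every `R > R₂`, the sequence
`r_m = C₃^m · M^m(R, L)` satisfies `M(r_m, L) > r_{m+1}^μ` for all `m ≥ N`. -/
theorem linearizer_fast_growth
    (L F Φ : EuclideanSpace ℝ (Fin 3) → EuclideanSpace ℝ (Fin 3))
    (hL : Continuous L) (hF : Continuous F) (hΦ : Continuous Φ)
    (C₁ β C₃ R₀ μ : ℝ) (hC₁ : 0 < C₁) (hβ : 1 < β) (hC₃ : 1 < C₃) (hR₀ : 0 < R₀)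
    (hμ : 1 < μ)
    (hfun : ∀ x, F (L x) = L (Φ x))
    (hΦbound : ∀ x, ‖Φ x‖ ≤ C₃ * ‖x‖)
    (hFgrowth : ∀ x : EuclideanSpace ℝ (Fin 3), R₀ < ‖x‖ → C₁ * ‖x‖ ^ β ≤ ‖F x‖)
    (hLgrowth : Filter.Tendsto (fun r => Real.log (maxMod L r) / Real.log r)
      Filter.atTop Filter.atTop) :
    ∃ R₂ : ℝ, 0 < R₂ ∧ ∃ N : ℕ, ∀ R : ℝ, R₂ < R → ∀ m : ℕ, N ≤ m →
      (C₃ ^ (m + 1) * iterMaxMod L R (m + 1)) ^ μ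
        < maxMod L (C₃ ^ m * iterMaxMod L R m) := by
  set β' : ℝ := (1 + β) / 2 with hβ'def
  have hβ'1 : 1 < β' := by rw [hβ'def]; linarith
  have hβ'β : β' < β := by rw [hβ'def]; linarith
  have hβ'0 : 0 < β' := by linarith
  obtain ⟨R₁, hR₁⟩ := (hLgrowth.eventually (eventually_ge_atTop (2:ℝ))).exists_forall_of_atTop
  have hTlim : Tendsto (fun t : ℝ => C₁ * t ^ (β - β')) atTop atTop :=
    (tendsto_rpow_atTop (by linarith)).const_mul_atTop hC₁
  obtain ⟨T₁, hT₁⟩ := (hTlim.eventually (eventually_ge_atTop (1:ℝ))).exists_forall_of_atTop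
  set R₂ : ℝ := max (max R₁ T₁) (max C₃ (max R₀ 2)) with hR₂def
  have h2R₂ : (2:ℝ) ≤ R₂ := le_max_of_le_right (le_max_of_le_right (le_max_right _ _))
  have hR₀R₂ : R₀ ≤ R₂ := le_max_of_le_right (le_max_of_le_right (le_max_left _ _))
  have hC₃R₂ : C₃ ≤ R₂ := le_max_of_le_right (le_max_left _ _)
  have hR₁R₂ : R₁ ≤ R₂ := le_max_of_le_left (le_max_left _ _)
  have hT₁R₂ : T₁ ≤ R₂ := le_max_of_le_left (le_max_right _ _)
  have hR₂pos : 0 < R₂ := by linarith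
  -- for r ≥ R₂ the maximum modulus dominates r
  have hMge : ∀ r : ℝ, R₂ ≤ r → r ≤ maxMod L r := by
    intro r hr
    have hr2 : (2:ℝ) ≤ r := h2R₂.trans hr
    have hlogr : 0 < Real.log r := Real.log_pos (by linarith)
    have hMnn : 0 ≤ maxMod L r := by
      have := le_maxMod L hL (x := 0) (r := r) (by simp; linarith)
      exact (norm_nonneg _).trans this
    have hdiv : 2 ≤ Real.log (maxMod L r) / Real.log r := hR₁ r (hR₁R₂.trans hr)
    have hMpos : 0 < maxMod L r := by
      rcases hMnn.lt_or_eq with h | h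
      · exact h
      · exfalso
        rw [← h, Real.log_zero, zero_div] at hdiv
        linarith
    have hlog : Real.log (r ^ 2) ≤ Real.log (maxMod L r) := by
      rw [Real.log_pow]
      push_cast
      rw [le_div_iff₀ hlogr] at hdiv
      linarith
    have hle : r ^ 2 ≤ maxMod L r :=
      (Real.log_le_log_iff (by positivity) hMpos).mp hlog
    nlinarith
  -- the single-step Hadamard-type inequality
  have key : ∀ r : ℝ, 0 ≤ r → R₀ < maxMod L r →
      C₁ * (maxMod L r) ^ β ≤ maxMod L (C₃ * r) := by
    intro r hr hMr
    obtain ⟨x, hx, hxe⟩ := exists_maxMod L hL hr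
    have h1 : C₁ * ‖L x‖ ^ β ≤ ‖F (L x)‖ := hFgrowth _ (by rw [← hxe]; exact hMr)
    rw [hfun] at h1
    have hΦx : ‖Φ x‖ ≤ C₃ * r :=
      (hΦbound x).trans (by nlinarith)
    have h2 : ‖L (Φ x)‖ ≤ maxMod L (C₃ * r) := le_maxMod L hL hΦx
    rw [hxe]
    exact h1.trans h2
  -- choose N from exponential domination of linear growth
  have hlo : (fun n : ℕ => ((n : ℝ))) =o[atTop] fun n : ℕ => β' ^ n :=
    isLittleO_coe_const_pow_of_one_lt hβ'1
  have hμ0 : (0:ℝ) < μ := by linarith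
  obtain ⟨N₀, hN₀⟩ := eventually_atTop.mp (hlo.def (show (0:ℝ) < 1/(3*μ) by positivity))
  refine ⟨R₂, hR₂pos, max N₀ 1, ?_⟩
  have hNle : ∀ m : ℕ, max N₀ 1 ≤ m → ((m:ℝ) + 2) * μ ≤ β' ^ m := by
    intro m hm
    have hm1 : 1 ≤ m := le_trans (le_max_right _ _) hm
    have h := hN₀ m (le_trans (le_max_left _ _) hm)
    have hb : (0:ℝ) < β' ^ m := by positivity
    rw [Real.norm_natCast, Real.norm_of_nonneg hb.le] at h
    have h3 : 3 * μ * (m:ℝ) ≤ β' ^ m := by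
      rw [div_mul_eq_mul_div, le_div_iff₀ (by positivity)] at h
      nlinarith
    have hm1' : (1:ℝ) ≤ (m:ℝ) := by exact_mod_cast hm1
    nlinarith
  intro R hR m hm
  -- iterates stay above R
  have hiter : ∀ k : ℕ, R ≤ iterMaxMod L R k := by
    intro k
    induction k with
    | zero => exact le_refl R
    | succ k ih =>
      have h1 : iterMaxMod L R (k+1) = maxMod L (iterMaxMod L R k) := by
        simp [iterMaxMod, Function.iterate_succ_apply']
      rw [h1]
      exact ih.trans (hMge _ (hR.le.trans ih))
  set s : ℝ := iterMaxMod L R m with hsdef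
  have hs : R ≤ s := hiter m
  have hs2 : R₂ ≤ s := hR.le.trans hs
  have hs0 : 0 ≤ s := by linarith
  set A : ℝ := maxMod L s with hAdef
  have hsA : s ≤ A := hMge s hs2
  have hA2 : R₂ ≤ A := hs2.trans hsA
  have hA1 : (1:ℝ) < A := by linarith
  have hiterA : iterMaxMod L R (m+1) = A := by
    simp [iterMaxMod, Function.iterate_succ_apply', hAdef, hsdef]
  -- inductive lower bound
  have hind : ∀ k : ℕ, A ^ (β' ^ k) ≤ maxMod L (C₃ ^ k * s) := by
    intro k
    induction k with
    | zero => simp [hAdef]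
    | succ k ih =>
      have hcks : s ≤ C₃ ^ k * s :=
        le_mul_of_one_le_left hs0 (one_le_pow₀ hC₃.le)
      have hcks0 : 0 ≤ C₃ ^ k * s := by positivity
      have hAt : A ≤ maxMod L (C₃ ^ k * s) := maxMod_mono L hL hs0 hcks
      set t : ℝ := maxMod L (C₃ ^ k * s) with htdef
      have htR₀ : R₀ < t := by linarith
      have htT : T₁ ≤ t := by linarith
      have ht0 : 0 < t := by linarith
      have hstep : C₁ * t ^ β ≤ maxMod L (C₃ * (C₃ ^ k * s)) := key _ hcks0 htR₀
      have hC₁t : t ^ β' ≤ C₁ * t ^ β := by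
        have h1 : 1 ≤ C₁ * t ^ (β - β') := hT₁ t htT
        have h2 : C₁ * t ^ (β - β') * t ^ β' = C₁ * t ^ β := by
          rw [mul_assoc, ← Real.rpow_add ht0]
          ring_nf
        calc t ^ β' = 1 * t ^ β' := (one_mul _).symm
          _ ≤ C₁ * t ^ (β - β') * t ^ β' := by
              apply mul_le_mul_of_nonneg_right h1 (Real.rpow_nonneg ht0.le _)
          _ = C₁ * t ^ β := h2
      have hA0 : (0:ℝ) ≤ A := by linarith
      have hA' : A ^ (β' ^ (k+1)) = (A ^ (β' ^ k)) ^ β' := by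
        rw [pow_succ, Real.rpow_mul hA0]
      have hmono : (A ^ (β' ^ k)) ^ β' ≤ t ^ β' :=
        Real.rpow_le_rpow (Real.rpow_nonneg hA0 _) ih hβ'0.le
      have hC₃eq : C₃ ^ (k+1) * s = C₃ * (C₃ ^ k * s) := by ring
      rw [hA', hC₃eq]
      exact hmono.trans (hC₁t.trans hstep)
  have hfinal := hind m
  rw [hiterA]
  have hN : ((m:ℝ) + 2) * μ ≤ β' ^ m := hNle m hm
  have hC₃A : C₃ < A := by linarith
  have hpow : C₃ ^ (m+1) < A ^ (m+1) :=
    pow_lt_pow_left₀ hC₃A (by linarith) (Nat.succ_ne_zero m)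
  have h1 : C₃ ^ (m+1) * A < A ^ (m+2) := by
    have : A ^ (m+2) = A ^ (m+1) * A := by ring
    rw [this]
    exact mul_lt_mul_of_pos_right hpow (by linarith)
  have h2 : (C₃ ^ (m+1) * A) ^ μ < ((A ^ (m+2) : ℝ)) ^ μ := by
    apply Real.rpow_lt_rpow (by positivity) h1 hμ0
  have h3 : ((A ^ (m+2) : ℝ)) ^ μ = A ^ (((m:ℝ) + 2) * μ) := by
    rw [← Real.rpow_natCast A (m+2), ← Real.rpow_mul (by linarith : (0:ℝ) ≤ A)]
    push_cast
    ring_nf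
  have h4 : A ^ (((m:ℝ) + 2) * μ) ≤ A ^ (β' ^ m) :=
    Real.rpow_le_rpow_of_exponent_le hA1.le hN
  calc (C₃ ^ (m+1) * A) ^ μ < ((A ^ (m+2) : ℝ)) ^ μ := h2
    _ = A ^ (((m:ℝ) + 2) * μ) := h3
    _ ≤ A ^ (β' ^ m) := h4
    _ ≤ maxMod L (C₃ ^ m * s) := hfinal
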